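/- arXiv:1311.6191 — 3 statements merged into one kernel-verified Lean document; each statement's English description precedes it below -/
import Mathlib

section
/- For a measurable function f on a measure space and any t > 0, the difference t(f**(t) - f*(t)) equals the integral from f*(t) to infinity of the distribution function μ_f(s) ds, where f* is the decreasing rearrangement, f**(t) = (1/t)∫_0^t f*(s) ds, and μ_f(s) = μ{|f| > s}. -/
/-!
Write `g u = μ {|f| > u}`. Since `g` is right-continuous, the infimum defining `f*` is attained,
so for `s > 0` and `u ≥ 0` one has `u < f*(s) ↔ s < g u`; moreover `g u ≤ t` once `u > f*(t)`.
Hence for `r > 0` the level set `{s ∈ (0, t) : f*(s) - f*(t) > r}` is the interval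
`(0, g (f*(t) + r))`, and the layer-cake formula for `f* - f*(t)` on `(0, t)` turns
`∫₀ᵗ (f*(s) - f*(t)) ds = t (f**(t) - f*(t))` into `∫_{f*(t)}^∞ g`.
-/

open MeasureTheory Set
open scoped ENNReal

theorem setLIntegral_Ioi_comp_const_add (g : ℝ → ℝ≥0∞) (a : ℝ) :
    ∫⁻ r in Ioi 0, g (a + r) = ∫⁻ u in Ioi a, g u := by
  simpa using (measurePreserving_add_left volume a).setLIntegral_comp_preimage_emb
    (measurableEmbedding_addLeft a) g (Ioi a)

section GeneralizedInverse

variable {g : ℝ → ℝ≥0∞} {c c' : ℝ≥0∞} {u : ℝ}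

theorem sInf_setOf_apply_le_anti (hne : {s | 0 ≤ s ∧ g s ≤ c}.Nonempty) (hcc : c ≤ c') :
    sInf {s | 0 ≤ s ∧ g s ≤ c'} ≤ sInf {s | 0 ≤ s ∧ g s ≤ c} :=
  csInf_le_csInf ⟨0, fun _ hs => hs.1⟩ hne fun _ hs => ⟨hs.1, hs.2.trans hcc⟩

theorem lt_sInf_setOf_apply_le_iff (hg : Antitone g) (hright : ∀ u, g u ≤ ⨆ v > u, g v)
    (hne : {s | 0 ≤ s ∧ g s ≤ c}.Nonempty) (hu : 0 ≤ u) :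
    u < sInf {s | 0 ≤ s ∧ g s ≤ c} ↔ c < g u := by
  constructor
  · intro h
    by_contra! hle
    exact h.not_ge (csInf_le ⟨0, fun _ hs => hs.1⟩ ⟨hu, hle⟩)
  · intro h
    by_contra! hle
    refine h.not_ge ((hright u).trans (iSup₂_le fun v hv => ?_))
    obtain ⟨w, hw, hwv⟩ := exists_lt_of_csInf_lt hne (hle.trans_lt hv)
    exact (hg hwv.le).trans hw.2

end GeneralizedInverse

theorem measure_lt_abs_le_iSup_measure_lt_abs {Ω : Type*} [MeasurableSpace Ω] (μ : Measure Ω)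
    (f : Ω → ℝ) (u : ℝ) : μ {x | u < |f x|} ≤ ⨆ v > u, μ {x | v < |f x|} := by
  have hunion : {x | u < |f x|} = ⋃ n : ℕ, {x | u + 1 / (n + 1) < |f x|} := by
    ext x
    simp only [mem_ofPred_eq, mem_iUnion]
    refine ⟨fun hx => ?_, fun ⟨n, hn⟩ => lt_trans (by simp; positivity) hn⟩
    obtain ⟨n, hn⟩ := exists_nat_one_div_lt (sub_pos.mpr hx)
    exact ⟨n, by linarith⟩
  have hmono : Monotone fun n : ℕ => {x | u + 1 / ((n : ℝ) + 1) < |f x|} := by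
    intro m n hmn x (hx : u + 1 / ((m : ℝ) + 1) < |f x|)
    exact lt_of_le_of_lt (by gcongr) hx
  rw [hunion, hmono.measure_iUnion]
  exact iSup_le fun n => le_iSup₂_of_le (u + 1 / (n + 1)) (by simp; positivity) le_rfl

section LayerCake

variable {φ : ℝ → ℝ} {g : ℝ → ℝ≥0∞} {t : ℝ}

theorem setLIntegral_Ioo_ofReal_sub_eq_setLIntegral_Ioi (ht : 0 ≤ t)
    (hφ : AEMeasurable φ (volume.restrict (Ioo 0 t)))
    (hφt : ∀ s ∈ Ioo 0 t, φ t ≤ φ s)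
    (hiff : ∀ s ∈ Ioo 0 t, ∀ u, φ t < u → (u < φ s ↔ ENNReal.ofReal s < g u))
    (hle : ∀ u, φ t < u → g u ≤ ENNReal.ofReal t) :
    ∫⁻ s in Ioo 0 t, ENNReal.ofReal (φ s - φ t) = ∫⁻ u in Ioi (φ t), g u := by
  have hslice : ∀ r ∈ Ioi (0 : ℝ),
      volume.restrict (Ioo 0 t) {s | r < φ s - φ t} = g (φ t + r) := by
    intro r (hr : 0 < r)
    have hu : φ t < φ t + r := by linarith
    have hfin : g (φ t + r) ≠ ∞ := ne_top_of_le_ne_top ENNReal.ofReal_ne_top (hle _ hu)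
    have hset : {s | r < φ s - φ t} ∩ Ioo 0 t = Ioo 0 (g (φ t + r)).toReal := by
      ext s
      simp only [mem_inter_iff, mem_ofPred_eq, mem_Ioo]
      constructor
      · rintro ⟨hs, hs0, hst⟩
        refine ⟨hs0, (ENNReal.ofReal_lt_iff_lt_toReal hs0.le hfin).mp ?_⟩
        exact (hiff s ⟨hs0, hst⟩ _ hu).mp (by linarith)
      · rintro ⟨hs0, hsg⟩
        have hst : s < t := hsg.trans_le (ENNReal.toReal_le_of_le_ofReal ht (hle _ hu))
        have := (hiff s ⟨hs0, hst⟩ _ hu).mpr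
          ((ENNReal.ofReal_lt_iff_lt_toReal hs0.le hfin).mpr hsg)
        exact ⟨by linarith, hs0, hst⟩
    rw [Measure.restrict_apply' measurableSet_Ioo, hset, Real.volume_Ioo, sub_zero,
      ENNReal.ofReal_toReal hfin]
  have hnonneg : 0 ≤ᵐ[volume.restrict (Ioo 0 t)] fun s => φ s - φ t := by
    filter_upwards [ae_restrict_mem measurableSet_Ioo] with s hs
    exact sub_nonneg.mpr (hφt s hs)
  rw [lintegral_eq_lintegral_meas_lt _ hnonneg (hφ.sub_const _),
    setLIntegral_congr_fun measurableSet_Ioi hslice, setLIntegral_Ioi_comp_const_add]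

theorem setIntegral_Ioo_sub_eq_setIntegral_Ioi (ht : 0 ≤ t) (hφ : IntegrableOn φ (Ioo 0 t))
    (hg : Measurable g) (hφt : ∀ s ∈ Ioo 0 t, φ t ≤ φ s)
    (hiff : ∀ s ∈ Ioo 0 t, ∀ u, φ t < u → (u < φ s ↔ ENNReal.ofReal s < g u))
    (hle : ∀ u, φ t < u → g u ≤ ENNReal.ofReal t) :
    ∫ s in Ioo 0 t, (φ s - φ t) = ∫ u in Ioi (φ t), (g u).toReal := by
  rw [integral_eq_lintegral_of_nonneg_ae, integral_toReal hg.aemeasurable,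
    setLIntegral_Ioo_ofReal_sub_eq_setLIntegral_Ioi ht hφ.aemeasurable hφt hiff hle]
  · exact (ae_restrict_iff' measurableSet_Ioi).mpr
      (ae_of_all _ fun u hu => (hle u hu).trans_lt ENNReal.ofReal_lt_top)
  · exact (ae_restrict_iff' measurableSet_Ioo).mpr
      (ae_of_all _ fun s hs => sub_nonneg.mpr (hφt s hs))
  · exact (hφ.sub (integrableOn_const measure_Ioo_lt_top.ne)).aestronglyMeasurable

end LayerCake

theorem stmt0_general {Ω : Type*} [MeasurableSpace Ω] (μ : Measure Ω) (f : Ω → ℝ)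
    (fstar : ℝ → ℝ)
    (hne : ∀ u : ℝ, 0 < u →
      {s : ℝ | 0 ≤ s ∧ μ {x | s < |f x|} ≤ ENNReal.ofReal u}.Nonempty)
    (hfstar : ∀ u : ℝ, 0 < u →
      fstar u = sInf {s : ℝ | 0 ≤ s ∧ μ {x | s < |f x|} ≤ ENNReal.ofReal u})
    (t : ℝ) (ht : 0 < t)
    (hint : IntegrableOn fstar (Ioo 0 t)) :
    t * ((1 / t) * (∫ s in Ioo (0:ℝ) t, fstar s) - fstar t)
      = ∫ s in Ioi (fstar t), (μ {x | s < |f x|}).toReal := by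
  set g : ℝ → ℝ≥0∞ := fun s => μ {x | s < |f x|}
  have hg : Antitone g := fun u v huv => measure_mono fun x hx => huv.trans_lt hx
  have hfstar_t : 0 ≤ fstar t := by rw [hfstar t ht]; exact Real.sInf_nonneg fun _ hx => hx.1
  have hiff : ∀ s, 0 < s → ∀ u, fstar t < u → (u < fstar s ↔ ENNReal.ofReal s < g u) := by
    intro s hs u hu
    rw [hfstar s hs]
    exact lt_sInf_setOf_apply_le_iff hg (measure_lt_abs_le_iSup_measure_lt_abs μ f) (hne s hs)
      (hfstar_t.trans hu.le)
  have hle : ∀ u, fstar t < u → g u ≤ ENNReal.ofReal t :=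
    fun u hu => not_lt.mp fun h => ((hiff t ht u hu).mpr h).asymm hu
  have hanti : ∀ s ∈ Ioo 0 t, fstar t ≤ fstar s := fun s hs => by
    rw [hfstar s hs.1, hfstar t ht]
    exact sInf_setOf_apply_le_anti (hne s hs.1) (ENNReal.ofReal_le_ofReal hs.2.le)
  rw [← setIntegral_Ioo_sub_eq_setIntegral_Ioi ht.le hint hg.measurable hanti
    (fun s hs => hiff s hs.1) hle, integral_sub hint (integrableOn_const measure_Ioo_lt_top.ne),
    setIntegral_const, Real.volume_real_Ioo_of_le ht.le, smul_eq_mul]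
  field_simp
  ring

/-- For a measurable `f` on a measure space and `t > 0`,
`t (f**(t) - f*(t)) = ∫_{f*(t)}^∞ μ_f(s) ds`. -/
theorem stmt0 {Ω : Type*} [MeasurableSpace Ω] (μ : Measure Ω) (f : Ω → ℝ)
    (hf : Measurable f)
    (fstar : ℝ → ℝ)
    (hne : ∀ u : ℝ, 0 < u →
      {s : ℝ | 0 ≤ s ∧ μ {x | s < |f x|} ≤ ENNReal.ofReal u}.Nonempty)
    (hfstar : ∀ u : ℝ, 0 < u →
      fstar u = sInf {s : ℝ | 0 ≤ s ∧ μ {x | s < |f x|} ≤ ENNReal.ofReal u})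
    (t : ℝ) (ht : 0 < t)
    (hint : IntegrableOn fstar (Ioo 0 t))
    (hdint : IntegrableOn (fun s => (μ {x | s < |f x|}).toReal) (Ioi (fstar t))) :
    t * ((1 / t) * (∫ s in Ioo (0:ℝ) t, fstar s) - fstar t)
      = ∫ s in Ioi (fstar t), (μ {x | s < |f x|}).toReal :=
  stmt0_general μ f fstar hne hfstar t ht hint
end

section
/- If a measurable function f on a σ-finite measure space satisfies ∫_0^∞ f**(s)^q ds/s < ∞ for some q ∈ [1,∞), then f = 0 almost everywhere. -/
/-!
If `f` is not a.e. zero, then `ε < |f|` on a set of positive measure for some `ε > 0`, so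
`f* ≥ ε`, and hence `f** ≥ ε`, on some interval `(0, δ)`. The integrand `f**(t)^q / t` then
dominates `ε^q / t` there, which is not integrable at `0`.
-/

open MeasureTheory Set
open scoped ENNReal

section

variable {Ω : Type*} [MeasurableSpace Ω]

noncomputable def decreasingRearrangement (μ : Measure Ω) (g : Ω → ℝ≥0∞) (t : ℝ) : ℝ≥0∞ :=
  sInf {s : ℝ≥0∞ | μ {x | s < g x} ≤ ENNReal.ofReal t}

lemma le_decreasingRearrangement {μ : Measure Ω} {g : Ω → ℝ≥0∞} {ε : ℝ≥0∞} {t : ℝ}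
    (h : ENNReal.ofReal t < μ {x | ε < g x}) : ε ≤ decreasingRearrangement μ g t := by
  refine le_sInf fun s hs => ?_
  by_contra! hsε
  have hsub : {x | ε < g x} ⊆ {x | s < g x} := fun x hx => hsε.trans hx
  exact (measure_mono hsub).trans hs |>.not_gt h

lemma exists_measure_setOf_lt_ne_zero {μ : Measure Ω} {g : Ω → ℝ≥0∞} (h : ¬ g =ᵐ[μ] 0) :
    ∃ ε ≠ 0, μ {x | ε < g x} ≠ 0 := by
  by_contra! hall
  refine h (ae_iff.2 (measure_mono_null (fun x hx => ?_)
    (measure_iUnion_null fun n : ℕ => hall _ (ENNReal.inv_ne_zero.2 (ENNReal.natCast_ne_top n)))))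
  exact mem_iUnion.2 (ENNReal.exists_inv_nat_lt hx)

end

lemma setLIntegral_Ioo_inv_ofReal_eq_top {δ : ℝ} (hδ : 0 < δ) :
    ∫⁻ t in Ioo 0 δ, (ENNReal.ofReal t)⁻¹ = ∞ := by
  by_contra hne
  have hint : IntegrableOn (fun t : ℝ => ((ENNReal.ofReal t)⁻¹).toReal) (Ioo 0 δ) :=
    integrable_toReal_of_lintegral_ne_top ENNReal.measurable_ofReal.inv.aemeasurable hne
  have hrpow : IntegrableOn (fun t : ℝ => t ^ (-1 : ℝ)) (Ioo 0 δ) := by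
    refine hint.congr_fun (fun t ht => ?_) measurableSet_Ioo
    simp only [ENNReal.toReal_inv, ENNReal.toReal_ofReal ht.1.le, Real.rpow_neg_one]
  exact lt_irrefl _ ((intervalIntegral.integrableOn_Ioo_rpow_iff hδ).1 hrpow)

lemma le_inv_mul_setLIntegral_Ioo {F : ℝ → ℝ≥0∞} {ε : ℝ≥0∞} {t : ℝ} (ht : 0 < t)
    (hF : ∀ s ∈ Ioo 0 t, ε ≤ F s) :
    ε ≤ (ENNReal.ofReal t)⁻¹ * ∫⁻ s in Ioo 0 t, F s := by
  rw [mul_comm, ← div_eq_mul_inv, ENNReal.le_div_iff_mul_le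
    (Or.inl (ENNReal.ofReal_pos.2 ht).ne') (Or.inl ENNReal.ofReal_ne_top)]
  calc ε * ENNReal.ofReal t = ∫⁻ _ in Ioo 0 t, ε := by simp [Real.volume_Ioo]
    _ ≤ ∫⁻ s in Ioo 0 t, F s := setLIntegral_mono' measurableSet_Ioo hF

lemma lintegral_Ioi_rpow_average_mul_inv_eq_top {F : ℝ → ℝ≥0∞} {ε : ℝ≥0∞} {δ q : ℝ}
    (hε : ε ≠ 0) (hδ : 0 < δ) (hq : 0 ≤ q) (hF : ∀ s ∈ Ioo 0 δ, ε ≤ F s) :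
    ∫⁻ t in Ioi 0, ((ENNReal.ofReal t)⁻¹ * ∫⁻ s in Ioo 0 t, F s) ^ q
      * (ENNReal.ofReal t)⁻¹ = ∞ := by
  have hεq : ε ^ q ≠ 0 := (ENNReal.rpow_pos_of_nonneg (pos_iff_ne_zero.2 hε) hq).ne'
  refine eq_top_iff.2 ?_
  calc ∞ = ε ^ q * ∫⁻ t in Ioo 0 δ, (ENNReal.ofReal t)⁻¹ := by
        rw [setLIntegral_Ioo_inv_ofReal_eq_top hδ, ENNReal.mul_top hεq]
    _ = ∫⁻ t in Ioo 0 δ, ε ^ q * (ENNReal.ofReal t)⁻¹ :=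
        (lintegral_const_mul _ ENNReal.measurable_ofReal.inv).symm
    _ ≤ ∫⁻ t in Ioo 0 δ, ((ENNReal.ofReal t)⁻¹ * ∫⁻ s in Ioo 0 t, F s) ^ q
          * (ENNReal.ofReal t)⁻¹ := by
        refine setLIntegral_mono' measurableSet_Ioo fun t ht => ?_
        gcongr
        exact le_inv_mul_setLIntegral_Ioo ht.1 fun s hs => hF s ⟨hs.1, hs.2.trans ht.2⟩
    _ ≤ _ := lintegral_mono_set Ioo_subset_Ioi_self

theorem stmt4_general {Ω : Type*} [MeasurableSpace Ω] (μ : Measure Ω)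
    (f : Ω → ℝ) (q : ℝ) (hq : 1 ≤ q)
    (fstar : ℝ → ℝ≥0∞)
    (hfstar : ∀ t : ℝ, fstar t =
      sInf {s : ℝ≥0∞ | μ {x | s < ENNReal.ofReal |f x|} ≤ ENNReal.ofReal t})
    (hfin : (∫⁻ t in Ioi (0:ℝ),
        ((ENNReal.ofReal t)⁻¹ * ∫⁻ s in Ioo (0:ℝ) t, fstar s) ^ q
          * (ENNReal.ofReal t)⁻¹) < ⊤) :
    f =ᵐ[μ] 0 := by
  set g : Ω → ℝ≥0∞ := fun x => ENNReal.ofReal |f x|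
  suffices g =ᵐ[μ] 0 by
    filter_upwards [this] with x hx
    simpa [g] using hx
  by_contra h
  obtain ⟨ε, hε, hμε⟩ := exists_measure_setOf_lt_ne_zero h
  obtain ⟨δ, -, hδ, hδμ⟩ := ENNReal.lt_iff_exists_real_btwn.1 (pos_iff_ne_zero.2 hμε)
  have hfstar_ge : ∀ s ∈ Ioo 0 δ, ε ≤ fstar s := fun s hs => by
    rw [hfstar]
    exact le_decreasingRearrangement ((ENNReal.ofReal_le_ofReal hs.2.le).trans_lt hδμ)
  exact hfin.ne <| lintegral_Ioi_rpow_average_mul_inv_eq_top hε (ENNReal.ofReal_pos.1 hδ)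
    (by linarith) hfstar_ge

/-- If a measurable `f` on a σ-finite measure space satisfies
`∫_0^∞ f**(s)^q ds/s < ∞` for some `q ∈ [1,∞)`, then `f = 0` a.e. -/
theorem stmt4 {Ω : Type*} [MeasurableSpace Ω] (μ : Measure Ω) [SigmaFinite μ]
    (f : Ω → ℝ) (hf : Measurable f) (q : ℝ) (hq : 1 ≤ q)
    (fstar : ℝ → ℝ≥0∞)
    (hfstar : ∀ t : ℝ, fstar t =
      sInf {s : ℝ≥0∞ | μ {x | s < ENNReal.ofReal |f x|} ≤ ENNReal.ofReal t})
    (hfin : (∫⁻ t in Ioi (0:ℝ),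
        ((ENNReal.ofReal t)⁻¹ * ∫⁻ s in Ioo (0:ℝ) t, fstar s) ^ q
          * (ENNReal.ofReal t)⁻¹) < ⊤) :
    f =ᵐ[μ] 0 :=
  stmt4_general μ f q hq fstar hfstar hfin
end

section
/- For the Euclidean isoperimetric profile I_n(t) = n γ_n^{1/n} t^{1-1/n} with γ_n = π^{n/2}/Γ(1+n/2), one has ∫_0^1 dt/(I_n(t)·(log(1/t))^{1/2}) = Γ(1+n/2)^{1/n}/√n, and this quantity is bounded by a constant independent of n; in particular sup_n ∫_0^1 dt/(I_n(t)(log(1/t))^{1/2}) < ∞. -/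
/-!
Substituting `t = e^{-u}` turns the integral into the Gamma integral
`∫_0^∞ u^{-1/2} e^{-u/n} du = √(π n)`, and `γ_n^{1/n} = √π / Γ(1 + n/2)^{1/n}`;
together they give the closed form. It is at most `1` because log-convexity of `Γ` gives
`Γ(1 + n/2)² ≤ Γ(1) Γ(1 + n) = n! ≤ nⁿ`.
-/

open MeasureTheory Set Real

theorem image_exp_neg_Ioi : (fun u : ℝ => exp (-u)) '' Ioi 0 = Ioo 0 1 := by
  ext x
  constructor
  · rintro ⟨u, hu, rfl⟩
    exact ⟨exp_pos _, exp_lt_one_iff.mpr (neg_neg_of_pos hu)⟩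
  · rintro ⟨hx0, hx1⟩
    exact ⟨-log x, by simpa using log_neg hx0 hx1, by simp [exp_log hx0]⟩

theorem integral_Ioo_zero_one_eq_integral_Ioi_exp_neg {E : Type*} [NormedAddCommGroup E]
    [NormedSpace ℝ E] (f : ℝ → E) :
    ∫ t in Ioo (0 : ℝ) 1, f t = ∫ u in Ioi 0, exp (-u) • f (exp (-u)) := by
  have hderiv (u : ℝ) : HasDerivWithinAt (fun u : ℝ => exp (-u)) (-exp (-u)) (Ioi 0) u := by
    simpa using ((hasDerivAt_neg u).exp).hasDerivWithinAt
  rw [← image_exp_neg_Ioi, integral_image_eq_integral_abs_deriv_smul measurableSet_Ioi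
    (fun u _ => hderiv u) (exp_injective.comp neg_injective).injOn]
  simp only [abs_neg, abs_of_pos (exp_pos _)]

theorem integral_Ioo_rpow_mul_log_inv_rpow {a r : ℝ} (ha : 0 < a) (hr : 0 < r) :
    ∫ t in Ioo (0 : ℝ) 1, t ^ (r - 1) * log (1 / t) ^ (a - 1) = (1 / r) ^ a * Gamma a := by
  rw [integral_Ioo_zero_one_eq_integral_Ioi_exp_neg, ← integral_rpow_mul_exp_neg_mul_Ioi ha hr]
  refine setIntegral_congr_fun measurableSet_Ioi fun u _ => ?_
  rw [one_div, ← exp_neg, neg_neg, log_exp, ← exp_mul, smul_eq_mul, ← mul_assoc, ← exp_add]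
  ring_nf

theorem integral_Ioo_one_div_rpow_mul_sqrt_log {r : ℝ} (hr : 0 < r) :
    ∫ t in Ioo (0 : ℝ) 1, 1 / (t ^ (1 - r) * √(log (1 / t))) = √(π / r) := by
  have hpow : ∀ t ∈ Ioo (0 : ℝ) 1,
      1 / (t ^ (1 - r) * √(log (1 / t))) = t ^ (r - 1) * log (1 / t) ^ ((1 / 2 : ℝ) - 1) := by
    rintro t ⟨ht0, ht1⟩
    have hlog : 0 ≤ log (1 / t) := log_nonneg (one_le_one_div ht0 ht1.le)
    rw [show (1 / 2 : ℝ) - 1 = -(1 / 2) by norm_num, rpow_neg hlog, ← sqrt_eq_rpow,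
      show r - 1 = -(1 - r) by ring, rpow_neg ht0.le, one_div, mul_inv]
  rw [setIntegral_congr_fun measurableSet_Ioo hpow,
    integral_Ioo_rpow_mul_log_inv_rpow one_half_pos hr, Gamma_one_half_eq, ← sqrt_eq_rpow,
    ← sqrt_mul (by positivity), one_div_mul_eq_div]

theorem Gamma_one_add_half_le_sqrt_Gamma_one_add {x : ℝ} (hx : -1 < x) :
    Gamma (1 + x / 2) ≤ √(Gamma (1 + x)) := by
  have h := Gamma_mul_add_mul_le_rpow_Gamma_mul_rpow_Gamma one_pos (by linarith : 0 < 1 + x)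
    one_half_pos one_half_pos (add_halves 1)
  rwa [Gamma_one, one_rpow, one_mul, ← sqrt_eq_rpow,
    show 1 / 2 * 1 + 1 / 2 * (1 + x) = 1 + x / 2 by ring] at h

theorem Gamma_one_add_half_rpow_inv_le_sqrt {n : ℕ} (hn : 0 < n) :
    Gamma (1 + n / 2) ^ (1 / (n : ℝ)) ≤ √n := by
  have hn0 : (0 : ℝ) < n := by exact_mod_cast hn
  have hfact : Gamma (1 + n) ≤ (n : ℝ) ^ (n : ℝ) := by
    rw [add_comm, Gamma_nat_eq_factorial, rpow_natCast]
    exact_mod_cast n.factorial_le_pow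
  calc Gamma (1 + n / 2) ^ (1 / (n : ℝ))
      ≤ √((n : ℝ) ^ (n : ℝ)) ^ (1 / (n : ℝ)) := by
        gcongr
        exact (Gamma_one_add_half_le_sqrt_Gamma_one_add (by linarith)).trans (sqrt_le_sqrt hfact)
    _ = √n := by
        rw [sqrt_eq_rpow, sqrt_eq_rpow, ← rpow_mul hn0.le, ← rpow_mul hn0.le]
        congr 1
        field_simp

noncomputable def unitBallVolume (n : ℕ) : ℝ :=
  π ^ ((n : ℝ) / 2) / Gamma (1 + (n : ℝ) / 2)

noncomputable def isoperimetricProfile (n : ℕ) (t : ℝ) : ℝ :=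
  n * unitBallVolume n ^ (1 / (n : ℝ)) * t ^ (1 - 1 / (n : ℝ))

theorem unitBallVolume_rpow_inv {n : ℕ} (hn : 0 < n) :
    unitBallVolume n ^ (1 / (n : ℝ)) = √π / Gamma (1 + n / 2) ^ (1 / (n : ℝ)) := by
  have hn0 : (0 : ℝ) < n := by exact_mod_cast hn
  rw [unitBallVolume, div_rpow (by positivity) (Gamma_pos_of_pos (by positivity)).le,
    ← rpow_mul pi_pos.le, show (n : ℝ) / 2 * (1 / n) = 1 / 2 by field_simp, ← sqrt_eq_rpow]

theorem integral_one_div_isoperimetricProfile_mul_sqrt_log {n : ℕ} (hn : 0 < n) :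
    ∫ t in Ioo (0 : ℝ) 1, 1 / (isoperimetricProfile n t * √(log (1 / t)))
      = Gamma (1 + n / 2) ^ (1 / (n : ℝ)) / √n := by
  have hn0 : (0 : ℝ) < n := by exact_mod_cast hn
  have hsplit (t : ℝ) : 1 / (isoperimetricProfile n t * √(log (1 / t))) =
      (n * unitBallVolume n ^ (1 / (n : ℝ)))⁻¹ *
        (1 / (t ^ (1 - 1 / (n : ℝ)) * √(log (1 / t)))) := by
    simp only [isoperimetricProfile, one_div, mul_inv, mul_assoc]
  simp only [hsplit, integral_const_mul]
  rw [integral_Ioo_one_div_rpow_mul_sqrt_log (by positivity), unitBallVolume_rpow_inv hn,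
    div_div_eq_mul_div, div_one, sqrt_mul pi_pos.le]
  have hG : Gamma (1 + n / 2) ^ (1 / (n : ℝ)) ≠ 0 := by positivity
  field_simp
  exact sq_sqrt hn0.le

/-- For the Euclidean isoperimetric profile `I_n(t) = n γ_n^{1/n} t^{1-1/n}` with
`γ_n = π^{n/2}/Γ(1+n/2)`, one has
`∫_0^1 dt/(I_n(t) √(log(1/t))) = Γ(1+n/2)^{1/n}/√n`, and this is uniformly
bounded in `n`. -/
theorem stmt8 :
    (∀ n : ℕ, 1 ≤ n →
      (∫ t in Ioo (0:ℝ) 1,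
          1 / (((n : ℝ) * (Real.pi ^ ((n:ℝ)/2) / Real.Gamma (1 + (n:ℝ)/2)) ^ (1/(n:ℝ))
                * t ^ (1 - 1/(n:ℝ))) * Real.sqrt (Real.log (1/t))))
        = Real.Gamma (1 + (n:ℝ)/2) ^ (1/(n:ℝ)) / Real.sqrt n)
    ∧ ∃ C : ℝ, ∀ n : ℕ, 1 ≤ n →
        (∫ t in Ioo (0:ℝ) 1,
            1 / (((n : ℝ) * (Real.pi ^ ((n:ℝ)/2) / Real.Gamma (1 + (n:ℝ)/2)) ^ (1/(n:ℝ))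
                  * t ^ (1 - 1/(n:ℝ))) * Real.sqrt (Real.log (1/t)))) ≤ C := by
  refine ⟨fun n hn => integral_one_div_isoperimetricProfile_mul_sqrt_log hn, 1, fun n hn => ?_⟩
  exact (integral_one_div_isoperimetricProfile_mul_sqrt_log hn).trans_le
    (div_le_one_of_le₀ (Gamma_one_add_half_rpow_inv_le_sqrt hn) (sqrt_nonneg _))
end
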